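/- arXiv:1503.03582 — 8 statements merged into one kernel-verified Lean document; each statement's English description precedes it below -/
import Mathlib

section
/- Let π be a uniformly random permutation of [n]. Then for each i, j ∈ [n], conditionally on the event {π(i) = j}, the back-degree a_n(i) of vertex i in the permutation graph of π follows a hypergeometric distribution with parameters (n-1, i-1, n-j): for each integer a in the admissible range, P(a_n(i) = a | π(i) = j) = C(i-1, a) C(n-i, n-j-a) / C(n-1, n-j). -/
/-- Back-degree of vertex `i`: number of `j < i` with `π j > π i`. -/
noncomputable def backDeg (n : ℕ) (π : Equiv.Perm (Fin n)) (i : Fin n) : ℕ :=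
  Nat.card {j : Fin n // j < i ∧ π i < π j}

/-! Conditioning on `π i = j` leaves a uniformly random bijection `f` from `{x ≠ i}` to
`{y ≠ j}`, and the back-degree of `i` counts the `x < i` with `f x > j`. The preimage under `f`
of the values above `j` is a subset of the same size, and every subset of that size is the
preimage for the same number of bijections. So the preimage is a uniformly random subset, and
the back-degree, its intersection with the positions below `i`, is hypergeometric. -/

open Finset
open scoped Nat

namespace Equiv

variable {α β : Type*} (p : α → Prop) (q : β → Prop) [DecidablePred p] [DecidablePred q]

def subtypeForallIffEquivProd :
    {f : α ≃ β // ∀ x, p x ↔ q (f x)} ≃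
      ({x // p x} ≃ {y // q y}) × ({x // ¬p x} ≃ {y // ¬q y}) where
  toFun f := (f.1.subtypeEquiv f.2, f.1.subtypeEquiv fun x => not_congr (f.2 x))
  invFun e := ⟨(sumCompl p).symm.trans ((sumCongr e.1 e.2).trans (sumCompl q)), fun x => by
    by_cases hx : p x <;> simp [hx, sumCompl_symm_apply_of_pos, sumCompl_symm_apply_of_neg,
      (e.1 _).2, (e.2 _).2]⟩
  left_inv f := by
    ext x
    by_cases hx : p x <;> simp [hx, sumCompl_symm_apply_of_pos, sumCompl_symm_apply_of_neg]
  right_inv e := by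
    ext x <;> simp [sumCompl_symm_apply_of_pos, sumCompl_symm_apply_of_neg, x.2]

variable {p q} in
theorem card_subtype_forall_iff [Fintype α] [Fintype β] [DecidableEq α] [DecidableEq β]
    (hαβ : Fintype.card α = Fintype.card β)
    (hpq : Fintype.card {x // p x} = Fintype.card {y // q y}) :
    Fintype.card {f : α ≃ β // ∀ x, p x ↔ q (f x)} =
      (Fintype.card {x // p x})! * (Fintype.card {x // ¬p x})! := by
  have hpq' : Fintype.card {x // ¬p x} = Fintype.card {y // ¬q y} := by
    rw [Fintype.card_subtype_compl, Fintype.card_subtype_compl, hαβ, hpq]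
  rw [Fintype.card_congr (subtypeForallIffEquivProd p q), Fintype.card_prod,
    Fintype.card_equiv (Fintype.equivOfCardEq hpq),
    Fintype.card_equiv (Fintype.equivOfCardEq hpq')]

def subtypeApplyEqEquiv [DecidableEq α] [DecidableEq β] (a : α) (b : β) :
    {f : α ≃ β // f a = b} ≃ ({x // x ≠ a} ≃ {y // y ≠ b}) :=
  letI : Unique ({x // x = a} ≃ {y // y = b}) := uniqueOfSubsingleton (ofUnique _ _)
  (subtypeEquivRight fun f => ⟨fun (h : f a = b) x => ⟨by rintro rfl; exact h,
      fun hx => f.injective (hx.trans h.symm)⟩, fun h => (h a).1 rfl⟩).trans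
    ((subtypeForallIffEquivProd (· = a) (· = b)).trans (uniqueProd _ _))

@[simp]
theorem subtypeApplyEqEquiv_apply_coe [DecidableEq α] [DecidableEq β] (a : α) (b : β)
    (f : {f : α ≃ β // f a = b}) (x : {x // x ≠ a}) :
    (subtypeApplyEqEquiv a b f x : β) = f.1 x :=
  rfl

end Equiv

theorem Finset.card_powersetCard_filter_card_inter {α : Type*} [Fintype α] [DecidableEq α]
    (s : Finset α) {a k : ℕ} (hak : a ≤ k) :
    #{u ∈ powersetCard k univ | #(u ∩ s) = a} =
      (#s).choose a * (Fintype.card α - #s).choose (k - a) := by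
  rw [← card_compl, ← card_powersetCard, ← card_powersetCard, ← card_product]
  refine card_bij' (fun u _ => (u ∩ s, u \ s)) (fun v _ => v.1 ∪ v.2) ?_ ?_ ?_ ?_
  · intro u hu
    simp only [mem_filter, mem_powersetCard_univ] at hu
    have := card_inter_add_card_sdiff u s
    simp only [mem_product, mem_powersetCard]
    exact ⟨⟨inter_subset_right, hu.2⟩, fun x hx => by simp_all, by omega⟩
  · rintro ⟨v, w⟩ h
    simp only [mem_product, mem_powersetCard] at h
    obtain ⟨⟨hv, hva⟩, hw, hwk⟩ := h
    have hdisj : Disjoint v w := disjoint_of_subset_left hv (subset_compl_iff_disjoint_left.mp hw)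
    have hvs : (v ∪ w) ∩ s = v := by grind [mem_compl]
    simp only [mem_filter, mem_powersetCard_univ, card_union_of_disjoint hdisj, hvs]
    omega
  · intro u _
    exact sup_inf_sdiff u s
  · rintro ⟨v, w⟩ h
    simp only [mem_product, mem_powersetCard] at h
    ext x <;> grind [mem_compl]

theorem Finset.card_filter_subtype_ne {α : Type*} [Fintype α] [DecidableEq α] (a : α)
    (p : α → Prop) [DecidablePred p] (hpa : ¬p a) :
    #{x : {x // x ≠ a} | p x} = #{x | p x} := by
  rw [← Fintype.card_subtype, ← Fintype.card_subtype]
  refine Fintype.card_congr <| (Equiv.subtypeSubtypeEquivSubtypeInter (· ≠ a) p).trans <|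
    Equiv.subtypeEquivRight fun _ => ⟨And.right, fun hx => ⟨?_, hx⟩⟩
  rintro rfl
  exact hpa hx

theorem card_equiv_filter_card_eq {α β : Type*} [Fintype α] [Fintype β] [DecidableEq α]
    [DecidableEq β] (hαβ : Fintype.card α = Fintype.card β) (S : Finset α) (T : Finset β)
    {a : ℕ} (ha : a ≤ #T) :
    Fintype.card {f : α ≃ β // #{x ∈ S | f x ∈ T} = a} =
      (#S).choose a * (Fintype.card α - #S).choose (#T - a) *
        ((#T)! * (Fintype.card β - #T)!) := by
  have mem_preimage (f : α ≃ β) (x : α) : x ∈ T.map f.symm.toEmbedding ↔ f x ∈ T := by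
    simp [mem_map_equiv]
  have preimage_inter (f : α ≃ β) : T.map f.symm.toEmbedding ∩ S = {x ∈ S | f x ∈ T} := by
    ext x; simp only [mem_inter, mem_preimage, mem_filter, and_comm]
  rw [Fintype.card_subtype, card_eq_sum_card_fiberwise
    (f := fun f : α ≃ β => T.map f.symm.toEmbedding)
    (t := {u ∈ powersetCard #T univ | #(u ∩ S) = a})
    (fun f hf => by simpa [preimage_inter] using hf),
    sum_const_nat (m := (#T)! * (Fintype.card β - #T)!), card_powersetCard_filter_card_inter S ha]
  intro u hu
  simp only [mem_filter, mem_powersetCard_univ] at hu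
  have hfiber (f : α ≃ β) : (#{x ∈ S | f x ∈ T} = a ∧ T.map f.symm.toEmbedding = u) ↔
      ∀ x, x ∈ u ↔ f x ∈ T := by
    constructor
    · rintro ⟨-, rfl⟩ x
      exact mem_preimage f x
    · intro h
      have hpre : T.map f.symm.toEmbedding = u := ext fun x => (mem_preimage f x).trans (h x).symm
      exact ⟨by rw [← preimage_inter, hpre, hu.2], hpre⟩
  rw [filter_filter, ← Fintype.card_subtype, Fintype.card_congr (Equiv.subtypeEquivRight hfiber),
    Equiv.card_subtype_forall_iff hαβ (by simp [hu.1])]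
  simp [hu.1, hαβ]

/-- 0-indexed: the paper's `i - 1` and `n - j` are `i.val` and `n - 1 - j.val`. -/
theorem backDeg_cond_hypergeometric_general (n : ℕ) (i j : Fin n) (a : ℕ)
    (h2 : a ≤ n - 1 - j.val) :
    (Nat.card {π : Equiv.Perm (Fin n) // backDeg n π i = a ∧ π i = j} : ℝ) /
      (Nat.card {π : Equiv.Perm (Fin n) // π i = j} : ℝ) =
    ((Nat.choose i.val a : ℝ) * (Nat.choose (n - 1 - i.val) (n - 1 - j.val - a) : ℝ)) /
      (Nat.choose (n - 1) (n - 1 - j.val) : ℝ) := by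
  set S : Finset {x : Fin n // x ≠ i} := {x | x.1 < i}
  set T : Finset {y : Fin n // y ≠ j} := {y | j < y.1}
  have hS : #S = i.val := by
    rw [card_filter_subtype_ne i (· < i) (lt_irrefl i), filter_gt_eq_Iio, Fin.card_Iio]
  have hT : #T = n - 1 - j.val := by
    rw [card_filter_subtype_ne j (j < ·) (lt_irrefl j), filter_lt_eq_Ioi, Fin.card_Ioi]
  have hcard (k : Fin n) : Fintype.card {x : Fin n // x ≠ k} = n - 1 := by
    simp [Fintype.card_subtype_compl]
  have hback (π : {π : Equiv.Perm (Fin n) // π i = j}) :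
      backDeg n π.1 i = #{x ∈ S | Equiv.subtypeApplyEqEquiv i j π x ∈ T} := by
    obtain ⟨π, rfl⟩ := π
    rw [backDeg, Nat.card_eq_fintype_card, Fintype.card_subtype, filter_filter,
      ← card_filter_subtype_ne i (fun x => x < i ∧ π i < π x) (by simp)]
    simp [T]
  have hnum : Nat.card {π : Equiv.Perm (Fin n) // backDeg n π i = a ∧ π i = j} =
      Fintype.card {f : {x // x ≠ i} ≃ {y // y ≠ j} // #{x ∈ S | f x ∈ T} = a} := by
    rw [← Nat.card_eq_fintype_card]
    refine Nat.card_congr <| (Equiv.subtypeEquivRight fun π => and_comm).trans <|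
      (Equiv.subtypeSubtypeEquivSubtypeInter _ _).symm.trans <|
      (Equiv.subtypeApplyEqEquiv i j).subtypeEquiv fun π => by rw [hback]
  have hden : Nat.card {π : Equiv.Perm (Fin n) // π i = j} = (n - 1)! := by
    rw [Nat.card_congr (Equiv.subtypeApplyEqEquiv i j), Nat.card_eq_fintype_card,
      Fintype.card_equiv (Fintype.equivOfCardEq ((hcard i).trans (hcard j).symm)), hcard]
  rw [hnum, hden, card_equiv_filter_card_eq ((hcard i).trans (hcard j).symm) S T (hT ▸ h2),
    hS, hT, hcard, hcard, Nat.cast_choose ℝ (Nat.sub_le (n - 1) j.val)]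
  push_cast
  field_simp

/-- for a uniformly random permutation, conditionally on `π i = j`
the back-degree of vertex `i` is hypergeometric with parameters
`(n-1, i-1, n-j)` (0-indexed: `i - 1 = i.val`, `n - j = n - 1 - j.val`). -/
theorem backDeg_cond_hypergeometric (n : ℕ) (i j : Fin n) (a : ℕ)
    (h1 : a ≤ i.val) (h2 : a ≤ n - 1 - j.val)
    (h3 : n - 1 - j.val ≤ a + (n - 1 - i.val)) :
    (Nat.card {π : Equiv.Perm (Fin n) // backDeg n π i = a ∧ π i = j} : ℝ) /
      (Nat.card {π : Equiv.Perm (Fin n) // π i = j} : ℝ) =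
    ((Nat.choose i.val a : ℝ) * (Nat.choose (n - 1 - i.val) (n - 1 - j.val - a) : ℝ)) /
      (Nat.choose (n - 1) (n - 1 - j.val) : ℝ) :=
  backDeg_cond_hypergeometric_general n i j a h2
end

section
/- Let π be a uniformly random permutation of [n] and let d_n(i) denote the degree of vertex i in the permutation graph of π. Then for all i, j ∈ [n], the conditional expectation of d_n(i) given π(i) = j equals ((i-1)(n-j) + (j-1)(n-i))/(n-1). -/
open Finset

/-- Degree of vertex `i` in the permutation graph of `π`. -/
noncomputable def deg (n : ℕ) (π : Equiv.Perm (Fin n)) (i : Fin n) : ℕ :=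
  Nat.card {j : Fin n // (j < i ∧ π i < π j) ∨ (i < j ∧ π j < π i)}

lemma deg_eq_card (n : ℕ) (π : Equiv.Perm (Fin n)) (i : Fin n) :
    deg n π i = (univ.filter fun k => (k < i ∧ π i < π k) ∨ (i < k ∧ π k < π i)).card := by
  rw [deg, Nat.card_eq_fintype_card, Fintype.card_subtype]

lemma fiber_card_eq (n : ℕ) (i j k : Fin n) (l1 l2 : Fin n) (h1 : l1 ≠ j) (h2 : l2 ≠ j) :
    (univ.filter fun π : Equiv.Perm (Fin n) => π i = j ∧ π k = l1).card =
    (univ.filter fun π : Equiv.Perm (Fin n) => π i = j ∧ π k = l2).card := by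
  apply Finset.card_bij' (fun π _ => Equiv.swap l1 l2 * π) (fun π _ => Equiv.swap l1 l2 * π)
  · intro π hπ
    simp only [mem_filter, mem_univ, true_and] at hπ ⊢
    simp [Equiv.Perm.mul_apply, hπ.1, hπ.2, Equiv.swap_apply_of_ne_of_ne h1.symm h2.symm,
      Equiv.swap_apply_left]
  · intro π hπ
    simp only [mem_filter, mem_univ, true_and] at hπ ⊢
    simp [Equiv.Perm.mul_apply, hπ.1, hπ.2, Equiv.swap_apply_of_ne_of_ne h1.symm h2.symm,
      Equiv.swap_apply_right]
  · intro π _; simp [← mul_assoc]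
  · intro π _; simp [← mul_assoc]

lemma count_mem (n : ℕ) (i j k : Fin n) (l0 : Fin n) (hl0 : l0 ≠ j)
    (T : Finset (Fin n)) (hT : j ∉ T) :
    (univ.filter fun π : Equiv.Perm (Fin n) => π i = j ∧ π k ∈ T).card =
      T.card * (univ.filter fun π : Equiv.Perm (Fin n) => π i = j ∧ π k = l0).card := by
  rw [Finset.card_eq_sum_card_fiberwise (f := fun π => π k) (t := T)
    (fun π hπ => (Finset.mem_filter.mp hπ).2.2)]
  rw [Finset.sum_congr rfl (fun l hl => ?_), Finset.sum_const, smul_eq_mul]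
  have hlj : l ≠ j := fun h => hT (h ▸ hl)
  have heq : ((univ.filter fun π : Equiv.Perm (Fin n) => π i = j ∧ π k ∈ T).filter
      (fun π => π k = l)) = univ.filter fun π : Equiv.Perm (Fin n) => π i = j ∧ π k = l := by
    ext π
    simp only [Finset.mem_filter, mem_univ, true_and]
    constructor
    · rintro ⟨⟨h1, _⟩, h2⟩; exact ⟨h1, h2⟩
    · rintro ⟨h1, h2⟩; exact ⟨⟨h1, h2 ▸ hl⟩, h2⟩
  rw [heq]
  exact fiber_card_eq n i j k l l0 hlj hl0

/-- for a uniformly random permutation, the conditional expectation of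
`d_n(i)` given `π i = j` equals `((i-1)(n-j) + (j-1)(n-i))/(n-1)`
(0-indexed: `i - 1 = i.val`, `n - j = n - 1 - j.val`). -/
theorem deg_cond_expectation (n : ℕ) (hn : 2 ≤ n) (i j : Fin n) :
    (∑ π ∈ Finset.univ.filter (fun π : Equiv.Perm (Fin n) => π i = j), (deg n π i : ℝ)) /
      ((Finset.univ.filter (fun π : Equiv.Perm (Fin n) => π i = j)).card : ℝ) =
    ((i.val : ℝ) * ((n : ℝ) - 1 - (j.val : ℝ)) + (j.val : ℝ) * ((n : ℝ) - 1 - (i.val : ℝ))) /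
      ((n : ℝ) - 1) := by
  classical
  obtain ⟨l0, hl0⟩ : ∃ l : Fin n, l ≠ j :=
    Fintype.exists_ne_of_one_lt_card (by simp; omega) j
  set N := univ.filter (fun π : Equiv.Perm (Fin n) => π i = j) with hNdef
  have hNpos : 0 < N.card := Finset.card_pos.mpr
    ⟨Equiv.swap i j, by simp [hNdef, Equiv.swap_apply_left]⟩
  -- For each k ≠ i, N.card = (n-1) * c k
  have hNcard : ∀ k : Fin n, k ≠ i → N.card =
      (n - 1) * (univ.filter fun π : Equiv.Perm (Fin n) => π i = j ∧ π k = l0).card := by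
    intro k hk
    have : N = univ.filter fun π : Equiv.Perm (Fin n) => π i = j ∧ π k ∈ univ.erase j := by
      ext π
      simp only [hNdef, Finset.mem_filter, mem_univ, true_and, Finset.mem_erase]
      exact ⟨fun h => ⟨h, fun hc => hk (π.injective (hc.trans h.symm)), trivial⟩, fun h => h.1⟩
    rw [this, count_mem n i j k l0 hl0 _ (Finset.notMem_erase j univ),
      Finset.card_erase_of_mem (mem_univ j), Finset.card_univ, Fintype.card_fin]
  -- per-k identity
  have hkey : ∀ k : Fin n,
      (n - 1) * (N.filter fun π => (k < i ∧ π i < π k) ∨ (i < k ∧ π k < π i)).card =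
      N.card * (if k < i then n - 1 - j.val else if i < k then j.val else 0) := by
    intro k
    rcases lt_trichotomy k i with hki | hki | hki
    · have hk : k ≠ i := ne_of_lt hki
      have h1 : (N.filter fun π => (k < i ∧ π i < π k) ∨ (i < k ∧ π k < π i)) =
          univ.filter fun π : Equiv.Perm (Fin n) => π i = j ∧ π k ∈ Finset.Ioi j := by
        ext π
        simp only [hNdef, Finset.filter_filter, Finset.mem_filter, mem_univ, true_and,
          Finset.mem_Ioi]
        constructor
        · rintro ⟨h, (⟨_, h2⟩ | ⟨h2, _⟩)⟩
          · exact ⟨h, h ▸ h2⟩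
          · exact absurd h2 (not_lt.mpr hki.le)
        · rintro ⟨h, h2⟩; exact ⟨h, Or.inl ⟨hki, h ▸ h2⟩⟩
      rw [h1, count_mem n i j k l0 hl0 _ (by simp), Fin.card_Ioi, if_pos hki,
        hNcard k hk]
      ring
    · subst hki
      have h1 : (N.filter fun π => (k < k ∧ π k < π k) ∨ (k < k ∧ π k < π k)) = ∅ := by
        apply Finset.filter_false_of_mem; intro π _; simp
      simp [h1]
    · have hk : k ≠ i := (ne_of_lt hki).symm
      have h1 : (N.filter fun π => (k < i ∧ π i < π k) ∨ (i < k ∧ π k < π i)) =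
          univ.filter fun π : Equiv.Perm (Fin n) => π i = j ∧ π k ∈ Finset.Iio j := by
        ext π
        simp only [hNdef, Finset.filter_filter, Finset.mem_filter, mem_univ, true_and,
          Finset.mem_Iio]
        constructor
        · rintro ⟨h, (⟨h2, _⟩ | ⟨_, h2⟩)⟩
          · exact absurd h2 (not_lt.mpr hki.le)
          · exact ⟨h, h ▸ h2⟩
        · rintro ⟨h, h2⟩; exact ⟨h, Or.inr ⟨hki, h ▸ h2⟩⟩
      rw [h1, count_mem n i j k l0 hl0 _ (by simp), Fin.card_Iio, if_neg (not_lt.mpr hki.le),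
        if_pos hki, hNcard k hk]
      ring
  -- main ℕ identity
  have key : (n - 1) * (∑ π ∈ N, deg n π i) =
      N.card * (i.val * (n - 1 - j.val) + (n - 1 - i.val) * j.val) := by
    have hS : (∑ π ∈ N, deg n π i) =
        ∑ k : Fin n, (N.filter fun π => (k < i ∧ π i < π k) ∨ (i < k ∧ π k < π i)).card := by
      simp only [deg_eq_card, Finset.card_filter]
      rw [Finset.sum_comm]
    rw [hS, Finset.mul_sum]
    rw [Finset.sum_congr rfl (fun k _ => hkey k), ← Finset.mul_sum]
    congr 1
    have : ∀ k : Fin n, (if k < i then n - 1 - j.val else if i < k then j.val else 0) =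
        (if k < i then n - 1 - j.val else 0) + (if i < k then j.val else 0) := by
      intro k
      rcases lt_trichotomy k i with h | h | h
      · simp [h, not_lt.mpr h.le]
      · simp [h]
      · simp [not_lt.mpr h.le, h]
    rw [Finset.sum_congr rfl (fun k _ => this k), Finset.sum_add_distrib,
      ← Finset.sum_filter, ← Finset.sum_filter, Finset.sum_const, Finset.sum_const,
      smul_eq_mul, smul_eq_mul]
    have e1 : univ.filter (fun k : Fin n => k < i) = Finset.Iio i := by
      ext k; simp
    have e2 : univ.filter (fun k : Fin n => i < k) = Finset.Ioi i := by
      ext k; simp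
    rw [e1, e2, Fin.card_Iio, Fin.card_Ioi]
  -- cast to ℝ
  have h1n : 1 ≤ n := by omega
  have hjn : j.val ≤ n - 1 := by have := j.isLt; omega
  have hin : i.val ≤ n - 1 := by have := i.isLt; omega
  have keyR := congrArg (Nat.cast : ℕ → ℝ) key
  push_cast [Nat.cast_sub hjn, Nat.cast_sub hin, Nat.cast_sub h1n] at keyR
  have hn1 : (0 : ℝ) < (n : ℝ) - 1 := by
    have : (2 : ℝ) ≤ (n : ℝ) := by exact_mod_cast hn
    linarith
  have hNc : (0 : ℝ) < (N.card : ℝ) := by exact_mod_cast hNpos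
  rw [div_eq_div_iff hNc.ne' hn1.ne']
  linear_combination keyR
end

section
/- Let U, V be independent uniform random variables on [0,1] and Z = (1-U)V + U(1-V). Then Z has density f_Z(z) = -log|1 - 2z| with respect to Lebesgue measure on [0,1]. -/
/-!
Since `Z = (1 - 2U) V + U`, given `U = u ≠ 1/2` the variable `Z` is uniform on
`[[u, 1 - u]] = {z | |1 - 2z| ≤ |1 - 2u|}`, with density `|1 - 2u|⁻¹`. By Tonelli the density of
`Z` at `z` is `∫₀¹ 1{|1 - 2z| ≤ |1 - 2u|} |1 - 2u|⁻¹ du`, and as `|1 - 2U|` is again uniform on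
`[0, 1]` this is `∫_{|1 - 2z|}^1 r⁻¹ dr = -log |1 - 2z|`.
-/

open MeasureTheory Set

theorem mem_uIcc_one_sub_iff {u z : ℝ} : z ∈ uIcc u (1 - u) ↔ |1 - 2 * z| ≤ |1 - 2 * u| := by
  rw [← sq_le_sq, mem_uIcc]
  constructor
  · rintro (⟨h₁, h₂⟩ | ⟨h₁, h₂⟩) <;> nlinarith
  · intro h
    rcases le_total u (1 - u) with hu | hu
    · left; constructor <;> nlinarith
    · right; constructor <;> nlinarith

theorem abs_one_sub_two_mul_le_one_iff {u : ℝ} : |1 - 2 * u| ≤ 1 ↔ u ∈ Icc 0 1 := by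
  rw [abs_le, mem_Icc]
  constructor <;> rintro ⟨h₁, h₂⟩ <;> constructor <;> linarith

theorem integral_comp_abs_one_sub_two_mul (g : ℝ → ℝ) :
    ∫ u, g |1 - 2 * u| = ∫ r in Ioi 0, g r := by
  rw [Measure.integral_comp_mul_left (fun s => g |1 - s|) 2,
    integral_sub_left_eq_self (fun s => g |s|), integral_comp_abs]
  norm_num
  ring

theorem volume_preimage_mul_add {a : ℝ} (ha : a ≠ 0) (b : ℝ) (s : Set ℝ) :
    volume ((fun x => a * x + b) ⁻¹' s) = ENNReal.ofReal |a⁻¹| * volume s := by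
  change volume ((a * ·) ⁻¹' ((· + b) ⁻¹' s)) = _
  rw [Real.volume_preimage_mul_left ha, measure_preimage_add_right]

theorem preimage_mul_add_uIcc {a : ℝ} (ha : a ≠ 0) (b : ℝ) :
    (fun x => a * x + b) ⁻¹' uIcc b (a + b) = Icc 0 1 := by
  change (a * ·) ⁻¹' ((· + b) ⁻¹' uIcc b (a + b)) = _
  rw [preimage_add_const_uIcc, preimage_const_mul_uIcc ha]
  simp [ha]

-- The density of `Z` given `U = u`; its value at `u = 1/2` is junk.
noncomputable def condDensity (u z : ℝ) : ℝ :=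
  if |1 - 2 * z| ≤ |1 - 2 * u| then |1 - 2 * u|⁻¹ else 0

theorem condDensity_nonneg (u z : ℝ) : 0 ≤ condDensity u z := by
  unfold condDensity; split_ifs <;> positivity

theorem measurable_condDensity : Measurable (Function.uncurry condDensity) :=
  Measurable.ite (measurableSet_le (by fun_prop) (by fun_prop)) (by fun_prop) measurable_const

theorem volume_slice_eq_lintegral_condDensity {A : Set ℝ} {u : ℝ} (hu : 1 - 2 * u ≠ 0) :
    volume.restrict (Icc 0 1) ((fun v => (1 - u) * v + u * (1 - v)) ⁻¹' A) =
      ∫⁻ z in A, ENNReal.ofReal (condDensity u z) := by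
  have hlin : (fun v : ℝ => (1 - u) * v + u * (1 - v)) = fun v => (1 - 2 * u) * v + u := by
    funext v; ring
  have hind : (fun z => ENNReal.ofReal (condDensity u z)) =
      (uIcc u (1 - u)).indicator fun _ => ENNReal.ofReal |1 - 2 * u|⁻¹ := by
    funext z
    simp only [condDensity, indicator, mem_uIcc_one_sub_iff]
    split_ifs <;> simp
  rw [hlin, Measure.restrict_apply' measurableSet_Icc, ← preimage_mul_add_uIcc hu u,
    ← preimage_inter, volume_preimage_mul_add hu, hind,
    lintegral_indicator_const measurableSet_uIcc, Measure.restrict_apply measurableSet_uIcc,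
    inter_comm, abs_inv, show 1 - 2 * u + u = 1 - u by ring]

theorem integral_condDensity {z : ℝ} (hz : z ∈ Icc 0 1) (hz₂ : 1 - 2 * z ≠ 0) :
    ∫ u in Icc 0 1, condDensity u z = -Real.log |1 - 2 * z| := by
  set t := |1 - 2 * z|
  have ht₀ : 0 < t := abs_pos.2 hz₂
  have ht₁ : t ≤ 1 := abs_one_sub_two_mul_le_one_iff.2 hz
  have hcut : (Icc 0 1).indicator (fun u => condDensity u z) =
      fun u => (Icc t 1).indicator (·⁻¹) |1 - 2 * u| := by
    funext u
    by_cases hu : u ∈ Icc 0 1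
    · simp [indicator, hu, condDensity, abs_one_sub_two_mul_le_one_iff.2 hu, t]
    · have hu' := mt abs_one_sub_two_mul_le_one_iff.1 hu
      simp [indicator, hu, hu']
  calc ∫ u in Icc 0 1, condDensity u z
      = ∫ u, (Icc t 1).indicator (·⁻¹) |1 - 2 * u| := by
        rw [← integral_indicator measurableSet_Icc, hcut]
    _ = ∫ r in t..1, r⁻¹ := by
        rw [integral_comp_abs_one_sub_two_mul, setIntegral_indicator measurableSet_Icc,
          inter_eq_right.2 (Icc_subset_Ioi_iff ht₁ |>.2 ht₀), integral_Icc_eq_integral_Ioc,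
          intervalIntegral.integral_of_le ht₁]
    _ = -Real.log t := by rw [integral_inv_of_pos ht₀ one_pos, one_div, Real.log_inv]

theorem lintegral_condDensity {z : ℝ} (hz : z ∈ Icc 0 1) (hz₂ : 1 - 2 * z ≠ 0) :
    ∫⁻ u in Icc 0 1, ENNReal.ofReal (condDensity u z) = ENNReal.ofReal (-Real.log |1 - 2 * z|) := by
  have hbound : ∀ u, ‖condDensity u z‖ ≤ |1 - 2 * z|⁻¹ := by
    intro u
    unfold condDensity
    split_ifs with h
    · rw [norm_inv, Real.norm_eq_abs, abs_abs]; exact inv_anti₀ (abs_pos.2 hz₂) h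
    · simp only [norm_zero]; positivity
  have hint : IntegrableOn (fun u => condDensity u z) (Icc 0 1) :=
    Measure.integrableOn_of_bounded measure_Icc_lt_top.ne
      measurable_condDensity.of_uncurry_right.aestronglyMeasurable (.of_forall hbound)
  rw [← integral_condDensity hz hz₂,
    ← ofReal_integral_eq_lintegral_ofReal hint (.of_forall fun u => condDensity_nonneg u z)]

theorem map_apply_eq_lintegral_condDensity {A : Set ℝ} (hA : MeasurableSet A) :
    Measure.map (fun p : ℝ × ℝ => (1 - p.1) * p.2 + p.1 * (1 - p.2))
        ((volume.restrict (Icc 0 1)).prod (volume.restrict (Icc 0 1))) A =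
      ∫⁻ z in A, ∫⁻ u in Icc 0 1, ENNReal.ofReal (condDensity u z) := by
  have hZ : Measurable fun p : ℝ × ℝ => (1 - p.1) * p.2 + p.1 * (1 - p.2) := by fun_prop
  rw [Measure.map_apply hZ hA, Measure.prod_apply (hZ hA)]
  refine (lintegral_congr_ae ?_).trans (lintegral_lintegral_swap
    (f := fun u z => ENNReal.ofReal (condDensity u z))
    (ENNReal.measurable_ofReal.comp measurable_condDensity).aemeasurable)
  filter_upwards [ae_restrict_of_ae (volume.ae_ne (1 / 2 : ℝ))] with u hu
  exact volume_slice_eq_lintegral_condDensity (by contrapose! hu; linarith)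

/-- if `U, V` are independent `Uniform(0,1)` and
`Z = (1-U)V + U(1-V)`, then `Z` has density `z ↦ -log|1 - 2z|` on `[0,1]`:
for every measurable `A ⊆ [0,1]`, `P(Z ∈ A) = ∫_A (-log|1-2z|) dz`. -/
theorem density_of_Z (A : Set ℝ) (hA : MeasurableSet A) (hA1 : A ⊆ Set.Icc (0 : ℝ) 1) :
    Measure.map (fun p : ℝ × ℝ => (1 - p.1) * p.2 + p.1 * (1 - p.2))
        ((volume.restrict (Set.Icc (0 : ℝ) 1)).prod (volume.restrict (Set.Icc (0 : ℝ) 1))) A =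
      ENNReal.ofReal (∫ z in A, -Real.log |1 - 2 * z|) := by
  have hlaw : Measure.map (fun p : ℝ × ℝ => (1 - p.1) * p.2 + p.1 * (1 - p.2))
        ((volume.restrict (Icc 0 1)).prod (volume.restrict (Icc 0 1))) A =
      ∫⁻ z in A, ENNReal.ofReal (-Real.log |1 - 2 * z|) := by
    rw [map_apply_eq_lintegral_condDensity hA]
    refine setLIntegral_congr_fun_ae hA ?_
    filter_upwards [volume.ae_ne (1 / 2 : ℝ)] with z hz hzA
    exact lintegral_condDensity (hA1 hzA) (by contrapose! hz; linarith)
  have hnonneg : 0 ≤ᵐ[volume.restrict A] fun z => -Real.log |1 - 2 * z| :=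
    ae_restrict_of_forall_mem hA fun z hz =>
      neg_nonneg.2 (Real.log_nonpos (abs_nonneg _) (abs_one_sub_two_mul_le_one_iff.2 (hA1 hz)))
  rw [integral_eq_lintegral_of_nonneg_ae hnonneg (Measurable.aestronglyMeasurable (by fun_prop)),
    ← hlaw, ENNReal.ofReal_toReal (measure_ne_top _ _)]
end

section
/- For γ > 0, lim_{n→∞} (n - ⌊γ√n⌋ + 1)^{⌊γ√n⌋} · (n - ⌊γ√n⌋)! / n! = e^{-γ²/2}. -/
/-!
Writing `k = ⌊γ√n⌋` and `M = n - k + 1`, the quotient is `∏_{i<k} (1 + i/M)⁻¹`. As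
`e^{-x} ≤ (1 + x)⁻¹ ≤ e^{x² - x}` for `x ≥ 0`, its logarithm is `-k(k-1)/(2M) + O(k³/M²)`,
and `k ~ γ√M` makes this tend to `-γ²/2`.
-/

open Filter Real Finset Topology
open scoped Nat

lemma exp_neg_le_inv_one_add {x : ℝ} (hx : -1 < x) : exp (-x) ≤ (1 + x)⁻¹ := by
  rw [exp_neg, add_comm]
  exact inv_anti₀ (by linarith) (add_one_le_exp x)

lemma inv_one_add_le_exp_sq_sub {x : ℝ} (hx : 0 ≤ x) : (1 + x)⁻¹ ≤ exp (x ^ 2 - x) :=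
  calc (1 + x)⁻¹ ≤ x ^ 2 - x + 1 := by
        rw [inv_le_iff_one_le_mul₀' (by positivity)]
        -- `(1 + x) (x² - x + 1) = 1 + x³`
        nlinarith [pow_nonneg hx 3]
    _ ≤ exp (x ^ 2 - x) := add_one_le_exp _

lemma sum_range_natCast (k : ℕ) : ∑ i ∈ range k, (i : ℝ) = k * (k - 1) / 2 := by
  induction k with
  | zero => simp
  | succ k ih => rw [sum_range_succ, ih]; push_cast; ring

section ProdBounds

variable {M : ℝ} (k : ℕ)

lemma exp_neg_le_prod_inv_one_add_div (hM : 0 ≤ M) :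
    exp (-(k * (k - 1) / 2 / M)) ≤ ∏ i ∈ range k, (1 + i / M)⁻¹ :=
  calc exp (-(k * (k - 1) / 2 / M)) = ∏ i ∈ range k, exp (-(i / M)) := by
        rw [← exp_sum, sum_neg_distrib, ← sum_div, sum_range_natCast]
    _ ≤ ∏ i ∈ range k, (1 + i / M)⁻¹ :=
        prod_le_prod (fun _ _ ↦ (exp_pos _).le) fun i _ ↦
          exp_neg_le_inv_one_add (by linarith [show 0 ≤ (i : ℝ) / M by positivity])

lemma prod_inv_one_add_div_le_exp (hM : 0 ≤ M) :
    ∏ i ∈ range k, (1 + i / M)⁻¹ ≤ exp (-(k * (k - 1) / 2 / M) + k ^ 3 / M ^ 2) := by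
  have hsq : ∑ i ∈ range k, ((i : ℝ) / M) ^ 2 ≤ k ^ 3 / M ^ 2 :=
    calc ∑ i ∈ range k, ((i : ℝ) / M) ^ 2 ≤ ∑ _i ∈ range k, ((k : ℝ) / M) ^ 2 :=
          sum_le_sum fun i hi ↦ by gcongr; exact_mod_cast (mem_range.1 hi).le
      _ = k ^ 3 / M ^ 2 := by rw [sum_const, card_range, nsmul_eq_mul]; ring
  calc ∏ i ∈ range k, (1 + i / M)⁻¹ ≤ ∏ i ∈ range k, exp ((i / M) ^ 2 - i / M) :=
        prod_le_prod (fun _ _ ↦ by positivity) fun i _ ↦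
          inv_one_add_le_exp_sq_sub (by positivity)
    _ = exp (∑ i ∈ range k, ((i : ℝ) / M) ^ 2 - k * (k - 1) / 2 / M) := by
        rw [← exp_sum, sum_sub_distrib, ← sum_div, sum_range_natCast]
    _ ≤ exp (-(k * (k - 1) / 2 / M) + k ^ 3 / M ^ 2) := by
        gcongr; linarith

end ProdBounds

theorem tendsto_prod_inv_one_add_div {ι : Type*} {l : Filter ι} {k : ι → ℕ} {M : ι → ℝ}
    {s : ℝ} (hM : Tendsto M l atTop) (hk : Tendsto (fun j ↦ k j / √(M j)) l (𝓝 s)) :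
    Tendsto (fun j ↦ ∏ i ∈ range (k j), (1 + i / M j)⁻¹) l (𝓝 (exp (-(s ^ 2 / 2)))) := by
  have hinv : Tendsto (fun j ↦ (√(M j))⁻¹) l (𝓝 0) :=
    (tendsto_sqrt_atTop.comp hM).inv_tendsto_atTop
  have hpos : ∀ᶠ j in l, 0 < M j := hM.eventually_gt_atTop 0
  have hmain : Tendsto (fun j ↦ k j * (k j - 1) / 2 / M j) l (𝓝 (s ^ 2 / 2)) := by
    have := (hk.mul (hk.sub hinv)).div_const 2
    rw [sub_zero, ← sq] at this
    refine this.congr' ?_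
    filter_upwards [hpos] with j hj
    field_simp
    rw [sq_sqrt hj.le]
    ring
  have herr : Tendsto (fun j ↦ (k j : ℝ) ^ 3 / M j ^ 2) l (𝓝 0) := by
    have := (hk.pow 3).mul hinv
    rw [mul_zero] at this
    refine this.congr' ?_
    filter_upwards [hpos] with j hj
    have hs : √(M j) ^ 4 = M j ^ 2 := by rw [show 4 = 2 * 2 by rfl, pow_mul, sq_sqrt hj.le]
    field_simp
    rw [hs]
  have hupper := (continuous_exp.tendsto _).comp (hmain.neg.add herr)
  rw [add_zero] at hupper
  refine tendsto_of_tendsto_of_tendsto_of_le_of_le' ((continuous_exp.tendsto _).comp hmain.neg)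
    hupper ?_ ?_ <;> filter_upwards [hpos] with j hj
  · exact exp_neg_le_prod_inv_one_add_div _ hj.le
  · exact prod_inv_one_add_div_le_exp _ hj.le

lemma pow_mul_factorial_div_factorial_add (m k : ℕ) :
    ((m : ℝ) + 1) ^ k * m ! / (m + k)! = ∏ i ∈ range k, (1 + i / ((m : ℝ) + 1))⁻¹ := by
  have hfac : ∀ i : ℕ, (1 + i / ((m : ℝ) + 1))⁻¹ = (m + 1) / (m + 1 + i) := fun i ↦ by
    field_simp
  rw [← Nat.factorial_mul_ascFactorial, Nat.ascFactorial_eq_prod_range]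
  simp_rw [hfac, prod_div_distrib, prod_const, card_range]
  push_cast
  have : (0 : ℝ) < ∏ i ∈ range k, ((m : ℝ) + 1 + i) := prod_pos fun i _ ↦ by positivity
  field_simp

theorem tendsto_pow_mul_factorial_div_factorial {k : ℕ → ℕ} {γ : ℝ}
    (hk : Tendsto (fun n : ℕ ↦ k n / √n) atTop (𝓝 γ)) :
    Tendsto (fun n : ℕ ↦ ((n : ℝ) - k n + 1) ^ k n * (n - k n)! / n !) atTop
      (𝓝 (exp (-(γ ^ 2 / 2)))) := by
  set M : ℕ → ℝ := fun n ↦ n - k n + 1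
  have hsqrt : Tendsto (fun n : ℕ ↦ √n) atTop atTop :=
    tendsto_sqrt_atTop.comp tendsto_natCast_atTop_atTop
  have hratio : Tendsto (fun n ↦ M n / n) atTop (𝓝 1) := by
    have := (tendsto_const_nhds (x := (1 : ℝ))).sub (hk.mul hsqrt.inv_tendsto_atTop)
      |>.add (tendsto_inv_atTop_zero.comp tendsto_natCast_atTop_atTop)
    rw [mul_zero, sub_zero, add_zero] at this
    refine this.congr' ?_
    filter_upwards [eventually_gt_atTop 0] with n hn
    have hn' : (0 : ℝ) < n := by exact_mod_cast hn
    simp only [M, Pi.inv_apply, Function.comp_apply]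
    field_simp
    rw [sq_sqrt hn'.le]
    ring
  have hM : Tendsto M atTop atTop := by
    refine (hratio.pos_mul_atTop one_pos tendsto_natCast_atTop_atTop).congr' ?_
    filter_upwards [eventually_gt_atTop 0] with n hn
    exact div_mul_cancel₀ _ (by positivity)
  have hkM : Tendsto (fun n ↦ k n / √(M n)) atTop (𝓝 γ) := by
    have := hk.div ((continuous_sqrt.tendsto 1).comp hratio) (by simp)
    rw [sqrt_one, div_one] at this
    refine this.congr' ?_
    filter_upwards [eventually_gt_atTop 0] with n hn
    have : (0 : ℝ) < √n := by positivity
    simp only [Pi.div_apply, Function.comp_apply, sqrt_div' _ (Nat.cast_nonneg n)]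
    field_simp
  refine (tendsto_prod_inv_one_add_div hM hkM).congr' ?_
  filter_upwards [hM.eventually_gt_atTop 0] with n hn
  have hkn : k n ≤ n := by
    have : (k n : ℝ) < n + 1 := by simp only [M] at hn; linarith
    exact Nat.lt_succ_iff.1 (by exact_mod_cast this)
  have hMn : M n = ((n - k n : ℕ) : ℝ) + 1 := by simp only [M]; push_cast [hkn]; ring
  rw [hMn, ← pow_mul_factorial_div_factorial_add, Nat.sub_add_cancel hkn, Nat.cast_sub hkn]

/-- for `γ > 0`,
`(n - ⌊γ√n⌋ + 1)^{⌊γ√n⌋} · (n - ⌊γ√n⌋)! / n! → e^{-γ²/2}` as `n → ∞`. -/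
theorem limit_exp_neg_gamma_sq_half (γ : ℝ) (hγ : 0 < γ) :
    Tendsto
      (fun n : ℕ =>
        ((n : ℝ) - (Nat.floor (γ * Real.sqrt n) : ℝ) + 1) ^ (Nat.floor (γ * Real.sqrt n)) *
          (Nat.factorial (n - Nat.floor (γ * Real.sqrt n)) : ℝ) / (Nat.factorial n : ℝ))
      atTop (nhds (Real.exp (-γ ^ 2 / 2))) := by
  rw [neg_div]
  exact tendsto_pow_mul_factorial_div_factorial <|
    (tendsto_nat_floor_mul_div_atTop hγ.le).comp <|
      tendsto_sqrt_atTop.comp tendsto_natCast_atTop_atTop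
end

section
/- Let π be a uniformly random permutation of [n]. Then the minimum degree of the permutation graph G_π satisfies δ(G_π)/n → 0 in probability and the maximum degree satisfies Δ(G_π)/n → 1 in probability as n → ∞. -/
open Filter

/-!
Vertex `i` of `G_π` has at most `i + π i` and at least `π i - i` neighbours. Hence, with
`k = ⌊εn/2⌋`, if every degree exceeds `εn` then `π` sends the first `k` positions outside the
first `k` values, and if `Δ < (1 - ε)n` it sends them outside the last `k` values. For any
`A, B`, the map `(π, a, b) ↦ (swap b (π a) * π, π a)` is injective on the triples with
`π(A) ∩ B = ∅`, `a ∈ A`, `b ∈ B`, so at most `n! · n / (|A| |B|)` permutations avoid `B` on `A`: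
a fraction `O(1/n)` when `|A|` and `|B|` are linear in `n`.
-/

open Finset Equiv
open scoped Nat Topology

theorem Fin.card_filter_lt {n : ℕ} (i : Fin n) : #{j | j < i} = i := by
  rw [filter_gt_eq_Iio, Fin.card_Iio]

theorem Fin.card_filter_rev_lt (n k : ℕ) : #{i : Fin n | (i.rev : ℕ) < k} = min n k :=
  (card_equiv Fin.revPerm (by simp)).trans Fin.card_filter_val_lt

section
variable {n : ℕ} (π : Perm (Fin n)) (i : Fin n)

theorem deg_eq_card_s12 : deg n π i = #{j | (j < i ∧ π i < π j) ∨ (i < j ∧ π j < π i)} := by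
  rw [deg, Nat.card_eq_fintype_card, Fintype.card_subtype]

theorem card_filter_apply_lt : #{j | π j < π i} = π i :=
  (card_equiv π (by simp)).trans (Fin.card_filter_lt (π i))

theorem deg_le_add : deg n π i ≤ i + π i := by
  rw [deg_eq_card_s12, ← Fin.card_filter_lt, ← card_filter_apply_lt π]
  refine (card_le_card fun j => ?_).trans (card_union_le _ _)
  simp only [mem_filter, mem_union, mem_univ, true_and]
  tauto

theorem apply_le_deg_add : (π i : ℕ) ≤ deg n π i + i := by
  rw [deg_eq_card_s12, ← card_filter_apply_lt π, ← Fin.card_filter_lt i]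
  refine (card_le_card fun j => ?_).trans (card_union_le _ _)
  simp only [mem_filter, mem_union, mem_univ, true_and]
  intro hj
  rcases lt_trichotomy i j with h | rfl | h
  · exact .inl (.inr ⟨h, hj⟩)
  · exact absurd hj (lt_irrefl _)
  · exact .inr h

theorem deg_le : deg n π i ≤ n :=
  (deg_eq_card_s12 π i).trans_le ((card_filter_le _ _).trans (card_fin n).le)

end

section
variable {α : Type*} [DecidableEq α]

theorem swap_mul_apply_mem_iff {A B : Finset α} {π : Perm α} {a b : α}
    (hπ : ∀ x ∈ A, π x ∉ B) (hb : b ∈ B) {x : α} (hx : x ∈ A) :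
    (swap b (π a) * π) x ∈ B ↔ x = a := by
  refine ⟨fun h => ?_, fun h => by simpa [h] using hb⟩
  by_contra hxa
  have hb' : π x ≠ b := fun e => hπ x hx (e ▸ hb)
  rw [Perm.mul_apply, swap_apply_of_ne_of_ne hb' (π.injective.ne hxa)] at h
  exact hπ x hx h

variable [Fintype α]

theorem card_filter_forall_apply_notMem_mul_le (A B : Finset α) :
    #{π : Perm α | ∀ x ∈ A, π x ∉ B} * (#A * #B) ≤ (Fintype.card α)! * Fintype.card α := by
  have := card_le_card_of_injOn (s := ({π | ∀ x ∈ A, π x ∉ B} : Finset (Perm α)) ×ˢ A ×ˢ B)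
    (t := univ) (fun p => (swap p.2.2 (p.1 p.2.1) * p.1, p.1 p.2.1)) (by simp [Set.MapsTo]) ?_
  · simpa [card_product, Fintype.card_perm] using this
  rintro ⟨π₁, a₁, b₁⟩ h₁ ⟨π₂, a₂, b₂⟩ h₂ heq
  simp only [coe_product, Set.mem_prod, mem_coe, mem_filter, mem_univ, true_and] at h₁ h₂
  obtain ⟨hπ₁, ha₁, hb₁⟩ := h₁
  obtain ⟨hπ₂, ha₂, hb₂⟩ := h₂
  obtain ⟨hσ, hv⟩ := Prod.mk.inj heq
  -- `a` is the only point of `A` sent into `B`, `b` is its image, and `π` is recovered by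
  -- undoing the swap.
  have ha : a₂ = a₁ := by
    rw [← swap_mul_apply_mem_iff hπ₁ hb₁ ha₂, hσ, swap_mul_apply_mem_iff hπ₂ hb₂ ha₂]
  subst ha
  have hb : b₁ = b₂ := by simpa using congr($hσ a₂)
  subst hb
  have hπ : π₁ = π₂ := by simpa [hv, swap_mul_self_mul] using congr(swap b₁ (π₂ a₂) * $hσ)
  simp [hπ]
end

theorem tendsto_card_div_factorial_of_forall_apply_notMem {P : ∀ n, Perm (Fin n) → Prop}
    {c : ℝ} (hc : 0 < c)
    (h : ∀ᶠ n in atTop, ∃ A B : Finset (Fin n), c * n ≤ #A ∧ c * n ≤ #B ∧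
      ∀ π, P n π → ∀ x ∈ A, π x ∉ B) :
    Tendsto (fun n => (Nat.card {π // P n π} : ℝ) / n !) atTop (𝓝 0) := by
  refine squeeze_zero' (.of_forall fun n => by positivity)
    ?_ (tendsto_const_div_atTop_nhds_zero_nat (c ^ 2)⁻¹)
  filter_upwards [h, eventually_gt_atTop 0] with n ⟨A, B, hA, hB, hP⟩ hn
  have hcount : Nat.card {π // P n π} * (#A * #B) ≤ n ! * n := by
    refine le_trans (Nat.mul_le_mul_right _ ?_)
      (by simpa using card_filter_forall_apply_notMem_mul_le A B)
    rw [← Fintype.card_subtype, ← Nat.card_eq_fintype_card]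
    exact Nat.card_mono (Set.toFinite _) (fun π => hP π)
  have hn' : (0 : ℝ) < n := by exact_mod_cast hn
  have : (Nat.card {π // P n π} : ℝ) * (c * n) ^ 2 ≤ n ! * n :=
    calc _ ≤ (Nat.card {π // P n π} : ℝ) * (#A * #B) := by
          rw [sq]; gcongr
      _ ≤ n ! * n := by exact_mod_cast hcount
  rw [div_le_div_iff₀ (by positivity) hn', inv_mul_eq_div, le_div_iff₀ (by positivity)]
  nlinarith

section
variable {n k : ℕ} {ε : ℝ} {π : Perm (Fin n)}

theorem forall_apply_notMem_of_forall_lt_deg (hk : 2 * k ≤ ε * n)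
    (hπ : ∀ i, ε * n < deg n π i) :
    ∀ x ∈ ({i | i < k} : Finset (Fin n)), π x ∉ ({i | i < k} : Finset (Fin n)) := by
  intro x hx hπx
  simp only [mem_filter, mem_univ, true_and] at hx hπx
  have : deg n π x < 2 * k := by have := deg_le_add π x; omega
  have : (deg n π x : ℝ) < 2 * k := by exact_mod_cast this
  linarith [hπ x]

theorem forall_apply_notMem_of_lt_abs_sup_deg (hk : 2 * k ≤ ε * n)
    (hπ : ε < |((univ.sup fun i => deg n π i : ℕ) : ℝ) / n - 1|) :
    ∀ x ∈ ({i | i < k} : Finset (Fin n)), π x ∉ ({i | (i.rev : ℕ) < k} : Finset (Fin n)) := by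
  intro x hx hπx
  simp only [mem_filter, mem_univ, true_and, Fin.val_rev] at hx hπx
  set Δ := univ.sup fun i => deg n π i
  have hn : (0 : ℝ) < n := by exact_mod_cast x.pos
  have hΔ : n + 1 ≤ Δ + 2 * k := by
    have := apply_le_deg_add π x
    have := le_sup (f := fun i => deg n π i) (mem_univ x)
    omega
  have hΔ' : (n : ℝ) + 1 ≤ Δ + 2 * k := by exact_mod_cast hΔ
  have hΔn : (Δ : ℝ) ≤ n := by exact_mod_cast Finset.sup_le fun i _ => deg_le π i
  rw [abs_sub_comm, abs_of_nonneg (by rw [sub_nonneg, div_le_one hn]; exact hΔn),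
    lt_sub_comm, div_lt_iff₀ hn] at hπ
  linarith
end

theorem eventually_mul_le_min_floor {ε : ℝ} (hε : 0 < ε) :
    ∀ᶠ n : ℕ in atTop, min (ε / 4) 1 * n ≤ (min n ⌊ε * n / 2⌋₊ : ℕ) := by
  filter_upwards [(tendsto_natCast_atTop_atTop (R := ℝ)).eventually_ge_atTop (4 / ε)] with n hn
  have hεn : 4 ≤ ε * n := by rwa [div_le_iff₀' hε] at hn
  have hfloor := Nat.lt_floor_add_one (ε * n / 2)
  rw [Nat.cast_min, le_min_iff]
  constructor
  · nlinarith [min_le_right (ε / 4) 1]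
  · nlinarith [min_le_left (ε / 4) 1]

/-- for a uniformly random permutation, `δ(G_π)/n → 0` and
`Δ(G_π)/n → 1` in probability: for every `ε > 0`,
`P(δ(G_π)/n > ε) → 0` and `P(|Δ(G_π)/n - 1| > ε) → 0`. -/
theorem min_max_degree_in_probability (ε : ℝ) (hε : 0 < ε) :
    Tendsto
      (fun n : ℕ =>
        (Nat.card {π : Equiv.Perm (Fin n) //
            ∀ i : Fin n, ε * (n : ℝ) < (deg n π i : ℝ)} : ℝ) / (Nat.factorial n : ℝ))
      atTop (nhds 0) ∧
    Tendsto
      (fun n : ℕ =>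
        (Nat.card {π : Equiv.Perm (Fin n) //
            ε < |((Finset.univ.sup (fun i : Fin n => deg n π i) : ℕ) : ℝ) / (n : ℝ) - 1|} : ℝ) /
          (Nat.factorial n : ℝ))
      atTop (nhds 0) := by
  have hc : 0 < min (ε / 4) 1 := by positivity
  have hk (n : ℕ) : 2 * (⌊ε * n / 2⌋₊ : ℝ) ≤ ε * n := by
    linarith [Nat.floor_le (by positivity : 0 ≤ ε * n / 2)]
  constructor <;> refine tendsto_card_div_factorial_of_forall_apply_notMem hc ?_ <;>
    filter_upwards [eventually_mul_le_min_floor hε] with n hn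
  · exact ⟨_, _, by rwa [Fin.card_filter_val_lt], by rwa [Fin.card_filter_val_lt],
      fun π => forall_apply_notMem_of_forall_lt_deg (hk n)⟩
  · exact ⟨_, _, by rwa [Fin.card_filter_val_lt], by rwa [Fin.card_filter_rev_lt],
      fun π => forall_apply_notMem_of_lt_abs_sup_deg (hk n)⟩
end

section
/- For β > 0, define a_c(β) = 1/2 - log(cosh(β/2))/β and φ_β(a) = e^{β(1-a)/2} sinh(aβ/2)/sinh(β/2). Then the stationarity equation defining z₀ = (1/β) log(φ_β(a)/(1 - φ_β(a))) satisfies: z₀ ∈ (0,1) if and only if a ∈ (a_c(β), 1 - a_c(β)). -/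
/-!
Put `t = β / 2` and `s = a β / 2`. Since `sinh t - e^{t-s} sinh s = e^{-s} sinh (t - s)`, the odds
of `φ_β(a)` are `φ / (1 - φ) = e^t sinh s / sinh (t - s)`, and replacing `a` by `1 - a` (that is,
`s` by `t - s`) turns them into `e^β` divided by them: `z₀(a) + z₀(1 - a) = 1`. So `z₀(a) < 1` iff
`0 < z₀(1 - a)`, and it remains to see `0 < z₀(a) ↔ a_c < a`. This is
`sinh (t - s) < e^t sinh s ↔ e^{t - 2s} < cosh t`, because the difference of the two sides of the
left inequality is `e^s (cosh t - e^{t - 2s})`.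
-/

open Real Set

namespace Real

theorem sinh_sub_exp_mul_sinh (t s : ℝ) :
    sinh t - exp (t - s) * sinh s = exp (-s) * sinh (t - s) := by
  simp only [sinh_eq, exp_sub, exp_neg]
  field_simp
  ring

theorem exp_mul_sinh_sub_sinh_sub (t s : ℝ) :
    exp t * sinh s - sinh (t - s) = exp s * (cosh t - exp (t - 2 * s)) := by
  simp only [sinh_eq, cosh_eq, exp_sub, exp_neg, two_mul, exp_add]
  field_simp
  ring

theorem sinh_sub_lt_exp_mul_sinh_iff (t s : ℝ) :
    sinh (t - s) < exp t * sinh s ↔ exp (t - 2 * s) < cosh t := by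
  rw [← sub_pos, exp_mul_sinh_sub_sinh_sub, mul_pos_iff_of_pos_left (exp_pos s), sub_pos]

end Real

noncomputable def sinhOdds (t s : ℝ) : ℝ := exp t * sinh s / sinh (t - s)

theorem div_one_sub_eq_sinhOdds {t : ℝ} (ht : sinh t ≠ 0) (s : ℝ) :
    exp (t - s) * sinh s / sinh t / (1 - exp (t - s) * sinh s / sinh t) = sinhOdds t s := by
  have h1 : 1 - exp (t - s) * sinh s / sinh t = exp (-s) * sinh (t - s) / sinh t := by
    rw [← sinh_sub_exp_mul_sinh, sub_div, div_self ht]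
  rw [h1, div_div_div_cancel_right₀ ht, sinhOdds, exp_sub, exp_neg]
  field_simp

theorem sinhOdds_pos {t s : ℝ} (hs : 0 < s) (hst : s < t) : 0 < sinhOdds t s :=
  div_pos (mul_pos (exp_pos t) (sinh_pos_iff.mpr hs)) (sinh_pos_iff.mpr (sub_pos.mpr hst))

theorem sinhOdds_mul_sinhOdds_sub {t s : ℝ} (hs : 0 < s) (hst : s < t) :
    sinhOdds t s * sinhOdds t (t - s) = exp (2 * t) := by
  have h1 := (sinh_pos_iff.mpr hs).ne'
  have h2 := (sinh_pos_iff.mpr (sub_pos.mpr hst)).ne'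
  rw [sinhOdds, sinhOdds, sub_sub_cancel, two_mul, exp_add]
  field_simp

theorem one_lt_sinhOdds_iff {t s : ℝ} (hst : s < t) :
    1 < sinhOdds t s ↔ exp (t - 2 * s) < cosh t := by
  rw [sinhOdds, one_lt_div (sinh_pos_iff.mpr (sub_pos.mpr hst)), sinh_sub_lt_exp_mul_sinh_iff]

theorem one_div_mul_log_mem_Ioo_iff {β r : ℝ} (hβ : 0 < β) (hr : 0 < r) :
    1 / β * log r ∈ Ioo 0 1 ↔ 1 < r ∧ r < exp β := by
  rw [mem_Ioo, one_div, ← div_eq_inv_mul, div_pos_iff_of_pos_right hβ, div_lt_one hβ,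
    log_pos_iff hr.le, log_lt_iff_lt_exp hr]

theorem sub_log_cosh_div_lt_iff {β : ℝ} (hβ : 0 < β) (a : ℝ) :
    1 / 2 - log (cosh (β / 2)) / β < a ↔ exp (β / 2 - 2 * (a * β / 2)) < cosh (β / 2) := by
  rw [← lt_log_iff_exp_lt (cosh_pos _), sub_lt_comm, lt_div_iff₀ hβ]
  constructor <;> intro h <;> linarith

theorem stationary_point_iff_general (β a : ℝ) (hβ : 0 < β) (ha : a ∈ Set.Ioo (0 : ℝ) 1)
    (φ : ℝ) (hφ : φ = Real.exp (β * (1 - a) / 2) * Real.sinh (a * β / 2) / Real.sinh (β / 2))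
    (z₀ : ℝ) (hz₀ : z₀ = (1 / β) * Real.log (φ / (1 - φ)))
    (ac : ℝ) (hac : ac = 1 / 2 - Real.log (Real.cosh (β / 2)) / β) :
    z₀ ∈ Set.Ioo (0 : ℝ) 1 ↔ a ∈ Set.Ioo ac (1 - ac) := by
  obtain ⟨ha0, ha1⟩ := ha
  have hs : 0 < a * β / 2 := by positivity
  have hst : a * β / 2 < β / 2 := by nlinarith
  have hodds : φ / (1 - φ) = sinhOdds (β / 2) (a * β / 2) := by
    rw [hφ, show β * (1 - a) / 2 = β / 2 - a * β / 2 by ring]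
    exact div_one_sub_eq_sinhOdds (sinh_pos_iff.mpr (by positivity)).ne' _
  have hsym := sinhOdds_mul_sinhOdds_sub hs hst
  rw [show 2 * (β / 2) = β by ring] at hsym
  rw [hz₀, hodds, one_div_mul_log_mem_Ioo_iff hβ (sinhOdds_pos hs hst), ← hsym,
    lt_mul_iff_one_lt_right (sinhOdds_pos hs hst), one_lt_sinhOdds_iff hst,
    one_lt_sinhOdds_iff (sub_lt_self _ hs), mem_Ioo, hac, lt_sub_comm,
    sub_log_cosh_div_lt_iff hβ, sub_log_cosh_div_lt_iff hβ]
  ring_nf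

/-- for `β > 0`, with `a_c(β) = 1/2 - log(cosh(β/2))/β`,
`φ_β(a) = e^{β(1-a)/2} sinh(aβ/2)/sinh(β/2)` and
`z₀ = (1/β) log(φ_β(a)/(1 - φ_β(a)))` (assuming `0 < φ_β(a) < 1`):
`z₀ ∈ (0,1)` if and only if `a ∈ (a_c(β), 1 - a_c(β))`. -/
theorem stationary_point_iff (β a : ℝ) (hβ : 0 < β) (ha : a ∈ Set.Ioo (0 : ℝ) 1)
    (φ : ℝ) (hφ : φ = Real.exp (β * (1 - a) / 2) * Real.sinh (a * β / 2) / Real.sinh (β / 2))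
    (hφ0 : 0 < φ) (hφ1 : φ < 1)
    (z₀ : ℝ) (hz₀ : z₀ = (1 / β) * Real.log (φ / (1 - φ)))
    (ac : ℝ) (hac : ac = 1 / 2 - Real.log (Real.cosh (β / 2)) / β) :
    z₀ ∈ Set.Ioo (0 : ℝ) 1 ↔ a ∈ Set.Ioo ac (1 - ac) :=
  stationary_point_iff_general β a hβ ha φ hφ z₀ hz₀ ac hac
end

section
/- For β ≠ 0, the function m_β(x,y) = (β sinh(β/2)) / (2 (e^{β/4} cosh(β(x-y)/2) - e^{-β/4} cosh(β(x+y-1)/2))²) on [0,1]² has uniform marginals: for every x ∈ [0,1], ∫_0^1 m_β(x,y) dy = 1. -/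
/-!
Put `a = β / 2` and let `D(y)` be the expression squared in the denominator of `m_β(x, y)`.
By the addition formulas `D(y) = P cosh (a y) + Q sinh (a y)`, and since `cosh² - sinh² = 1`,
`sinh (a y) / (P D(y))` is a primitive of `a / D(y)²`. Hence `∫₀¹ m_β(x, y) dy` equals
`sinh² a / (D(0) D(1))`, and `D(0) D(1) = sinh² a` is again a hyperbolic identity.
`D` has no zero because `D(y) = e^{a(y - 1/2)} sinh (a (1 - x)) + e^{-a(y - 1/2)} sinh (a x)`,
where for `x ∈ [0, 1]` both sinh terms have the sign of `a` and do not both vanish.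
-/

open Real Set

theorem mul_sinh_mul_nonneg (a : ℝ) {t : ℝ} (ht : 0 ≤ t) : 0 ≤ a * sinh (a * t) := by
  rcases le_total 0 a with ha | ha
  · exact mul_nonneg ha (sinh_nonneg_iff.2 (mul_nonneg ha ht))
  · exact mul_nonneg_of_nonpos_of_nonpos ha
      (sinh_nonpos_iff.2 (mul_nonpos_of_nonpos_of_nonneg ha ht))

theorem mul_sinh_mul_pos {a t : ℝ} (ha : a ≠ 0) (ht : 0 < t) : 0 < a * sinh (a * t) := by
  rcases ha.lt_or_gt with ha | ha
  · exact mul_pos_of_neg_of_neg ha (sinh_neg_iff.2 (mul_neg_of_neg_of_pos ha ht))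
  · exact mul_pos ha (sinh_pos_iff.2 (mul_pos ha ht))

theorem hasDerivAt_sinh_div_cosh_add_sinh (a P Q y : ℝ)
    (hy : P * cosh (a * y) + Q * sinh (a * y) ≠ 0) :
    HasDerivAt (fun y => sinh (a * y) / (P * cosh (a * y) + Q * sinh (a * y)))
      (a * P / (P * cosh (a * y) + Q * sinh (a * y)) ^ 2) y := by
  have hlin : HasDerivAt (fun y => a * y) a y := by simpa using (hasDerivAt_id y).const_mul a
  refine (hlin.sinh.div ((hlin.cosh.const_mul P).add (hlin.sinh.const_mul Q)) hy).congr_deriv ?_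
  simp only [Pi.add_apply]
  linear_combination (a * P / (P * cosh (a * y) + Q * sinh (a * y)) ^ 2) *
    cosh_sq_sub_sinh_sq (a * y)

theorem integral_div_sq_of_eq_cosh_add_sinh {G : ℝ → ℝ} {a P Q : ℝ} (c : ℝ)
    (hG : ∀ y, G y = P * cosh (a * y) + Q * sinh (a * y)) (hG0 : ∀ y ∈ uIcc 0 c, G y ≠ 0) :
    ∫ y in (0 : ℝ)..c, a / G y ^ 2 = sinh (a * c) / (G 0 * G c) := by
  obtain rfl : G = fun y => P * cosh (a * y) + Q * sinh (a * y) := funext hG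
  have hP : P ≠ 0 := by simpa using hG0 0 left_mem_uIcc
  have hderiv : ∀ y ∈ uIcc 0 c, HasDerivAt
      (fun y => sinh (a * y) / (P * cosh (a * y) + Q * sinh (a * y)) / P)
      (a / (P * cosh (a * y) + Q * sinh (a * y)) ^ 2) y := fun y hy => by
    refine ((hasDerivAt_sinh_div_cosh_add_sinh a P Q y (hG0 y hy)).div_const P).congr_deriv ?_
    field_simp
  have hint : IntervalIntegrable (fun y => a / (P * cosh (a * y) + Q * sinh (a * y)) ^ 2)
      MeasureTheory.volume 0 c :=
    (continuousOn_const.div (by fun_prop) fun y hy => pow_ne_zero 2 (hG0 y hy)).intervalIntegrable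
  rw [intervalIntegral.integral_eq_sub_of_hasDerivAt hderiv hint]
  simp only [mul_zero, sinh_zero, cosh_zero, mul_one, add_zero, zero_div, sub_zero]
  field_simp

noncomputable def mallowsDenom (β x y : ℝ) : ℝ :=
  exp (β / 4) * cosh (β * (x - y) / 2) - exp (-β / 4) * cosh (β * (x + y - 1) / 2)

theorem mallowsDenom_eq_cosh_add_sinh (β x y : ℝ) :
    mallowsDenom β x y =
      (exp (β / 4) * cosh (β / 2 * x) - exp (-β / 4) * cosh (β / 2 * (x - 1))) *
          cosh (β / 2 * y) +
        -(exp (β / 4) * sinh (β / 2 * x) + exp (-β / 4) * sinh (β / 2 * (x - 1))) *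
          sinh (β / 2 * y) := by
  rw [mallowsDenom, show β * (x - y) / 2 = β / 2 * x - β / 2 * y by ring,
    show β * (x + y - 1) / 2 = β / 2 * (x - 1) + β / 2 * y by ring, cosh_sub, cosh_add]
  ring

theorem mallowsDenom_eq_exp (β x y : ℝ) :
    mallowsDenom β x y = exp (β / 2 * (y - 1 / 2)) * sinh (β / 2 * (1 - x)) +
      exp (-(β / 2 * (y - 1 / 2))) * sinh (β / 2 * x) := by
  simp only [mallowsDenom, cosh_eq, sinh_eq, mul_add, mul_sub, mul_div_assoc', ← exp_add]
  ring_nf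

theorem mul_mallowsDenom_pos {β x : ℝ} (hβ : β ≠ 0) (hx : x ∈ Icc 0 1) (y : ℝ) :
    0 < β * mallowsDenom β x y := by
  have ha : β / 2 ≠ 0 := div_ne_zero hβ two_ne_zero
  suffices 0 < exp (β / 2 * (y - 1 / 2)) * (β / 2 * sinh (β / 2 * (1 - x))) +
      exp (-(β / 2 * (y - 1 / 2))) * (β / 2 * sinh (β / 2 * x)) by
    rw [mallowsDenom_eq_exp]
    linarith
  rcases hx.1.eq_or_lt with rfl | hx0
  · simpa using mul_pos (exp_pos _) (mul_sinh_mul_pos ha one_pos)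
  · exact add_pos_of_nonneg_of_pos
      (mul_nonneg (exp_pos _).le (mul_sinh_mul_nonneg _ (sub_nonneg.2 hx.2)))
      (mul_pos (exp_pos _) (mul_sinh_mul_pos ha hx0))

theorem mallowsDenom_zero_mul_mallowsDenom_one (β x : ℝ) :
    mallowsDenom β x 0 * mallowsDenom β x 1 = sinh (β / 2) ^ 2 := by
  have hprod : exp (β / 4) * exp (-β / 4) = 1 := by rw [← exp_add]; ring_nf; simp
  have hsq : exp (β / 4) ^ 2 + exp (-β / 4) ^ 2 = 2 * cosh (β / 2 * x - β / 2 * (x - 1)) := by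
    rw [cosh_eq, sq, sq, ← exp_add, ← exp_add]
    ring_nf
  rw [cosh_sub] at hsq
  rw [show β / 2 = β / 2 * x - β / 2 * (x - 1) by ring, sinh_sub]
  simp only [mallowsDenom, sub_zero, add_zero, show β * (x + 1 - 1) / 2 = β / 2 * x by ring,
    show β * (x - 1) / 2 = β / 2 * (x - 1) by ring, show β * x / 2 = β / 2 * x by ring]
  linear_combination (cosh (β / 2 * x) * cosh (β / 2 * (x - 1))) * hsq
    - (cosh (β / 2 * x) ^ 2 + cosh (β / 2 * (x - 1)) ^ 2) * hprod
    + cosh (β / 2 * (x - 1)) ^ 2 * cosh_sq_sub_sinh_sq (β / 2 * x)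
    + cosh (β / 2 * x) ^ 2 * cosh_sq_sub_sinh_sq (β / 2 * (x - 1))

/-- for `β ≠ 0`, the Mallows permuton density
`m_β(x,y) = β sinh(β/2) / (2 (e^{β/4} cosh(β(x-y)/2) - e^{-β/4} cosh(β(x+y-1)/2))²)`
has uniform marginals: for every `x ∈ [0,1]`, `∫₀¹ m_β(x,y) dy = 1`. -/
theorem mallows_density_uniform_marginals (β : ℝ) (hβ : β ≠ 0)
    (x : ℝ) (hx : x ∈ Set.Icc (0 : ℝ) 1) :
    (∫ y in (0 : ℝ)..1,
        β * Real.sinh (β / 2) /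
          (2 * (Real.exp (β / 4) * Real.cosh (β * (x - y) / 2) -
            Real.exp (-β / 4) * Real.cosh (β * (x + y - 1) / 2)) ^ 2)) = 1 := by
  have hD : ∀ y, mallowsDenom β x y ≠ 0 := fun y h => by
    simpa [h] using mul_mallowsDenom_pos hβ hx y
  have hsinh : sinh (β / 2) ≠ 0 := sinh_ne_zero.2 (div_ne_zero hβ two_ne_zero)
  calc ∫ y in (0 : ℝ)..1, β * sinh (β / 2) / (2 * mallowsDenom β x y ^ 2)
      = sinh (β / 2) * ∫ y in (0 : ℝ)..1, β / 2 / mallowsDenom β x y ^ 2 := by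
        rw [← intervalIntegral.integral_const_mul]
        congr 1 with y
        ring
    _ = sinh (β / 2) * (sinh (β / 2 * 1) / (mallowsDenom β x 0 * mallowsDenom β x 1)) := by
        rw [integral_div_sq_of_eq_cosh_add_sinh 1 (mallowsDenom_eq_cosh_add_sinh β x)
          fun y _ => hD y]
    _ = 1 := by
        rw [mallowsDenom_zero_mul_mallowsDenom_one, mul_one]
        field_simp
end

section
/- Let s ∈ [0,1], U ~ Uniform(0,1), and let κ_s be the joint law of (U, U + s mod 1). Then for 0 ≤ a, b ≤ 1, the distribution function satisfies F_{κ_s}(a,b) = max(min(a, b-s), 0) + max(min(a+s-1, b), 0). -/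
open MeasureTheory

/-- for `s ∈ [0,1]`, `U ~ Uniform(0,1)` and `κ_s` the joint law of
`(U, U + s mod 1)`, the distribution function satisfies, for `0 ≤ a, b ≤ 1`,
`F_{κ_s}(a,b) = P(U ≤ a ∧ (U + s mod 1) ≤ b)
             = max(min(a, b - s), 0) + max(min(a + s - 1, b), 0)`. -/
theorem shifted_uniform_cdf (s a b : ℝ) (hs : s ∈ Set.Icc (0 : ℝ) 1)
    (ha : a ∈ Set.Icc (0 : ℝ) 1) (hb : b ∈ Set.Icc (0 : ℝ) 1) :
    (volume.restrict (Set.Icc (0 : ℝ) 1)) {u : ℝ | u ≤ a ∧ Int.fract (u + s) ≤ b} =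
      ENNReal.ofReal (max (min a (b - s)) 0 + max (min (a + s - 1) b) 0) := by
  obtain ⟨hs0, hs1⟩ := hs
  obtain ⟨ha0, ha1⟩ := ha
  obtain ⟨hb0, hb1⟩ := hb
  set c1 := min a (b - s) with hc1
  set c2 := min a (b - s + 1) with hc2
  have hSmeas : MeasurableSet {u : ℝ | u ≤ a ∧ Int.fract (u + s) ≤ b} := by
    have h1 : MeasurableSet {u : ℝ | u ≤ a} := measurableSet_Iic
    have h2 : MeasurableSet {u : ℝ | Int.fract (u + s) ≤ b} :=
      (measurable_fract.comp (measurable_id.add_const s)) measurableSet_Iic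
    exact h1.inter h2
  rw [Measure.restrict_apply hSmeas]
  have key : volume ({u : ℝ | u ≤ a ∧ Int.fract (u + s) ≤ b} ∩ Set.Icc 0 1) =
      volume (Set.Icc 0 c1 ∪ Set.Ioc (1 - s) c2) := by
    apply le_antisymm
    · have hsub : {u : ℝ | u ≤ a ∧ Int.fract (u + s) ≤ b} ∩ Set.Icc 0 1 ⊆
          (Set.Icc 0 c1 ∪ Set.Ioc (1 - s) c2) ∪ {1 - s, 1} := by
        rintro u ⟨⟨hua, hf⟩, hu0, hu1⟩
        have hus0 : (0:ℝ) ≤ u + s := by linarith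
        rcases lt_trichotomy (u + s) 1 with h | h | h
        · left; left
          have : Int.fract (u + s) = u + s := Int.fract_eq_self.mpr ⟨hus0, h⟩
          exact ⟨hu0, le_min hua (by linarith [this ▸ hf])⟩
        · right
          have : u = 1 - s := by linarith
          exact Or.inl this
        · rcases eq_or_lt_of_le (show u + s ≤ 2 by linarith) with h2 | h2
          · right
            have : u = 1 := by linarith
            exact Or.inr this
          · left; right
            have hfr : Int.fract (u + s) = u + s - 1 := by
              have h' := Int.fract_add_one (u + s - 1)
              rw [show u + s - 1 + 1 = u + s by ring] at h'
              rw [h', Int.fract_eq_self.mpr ⟨by linarith, by linarith⟩]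
            exact ⟨by linarith, le_min hua (by linarith [hfr ▸ hf])⟩
      calc volume ({u : ℝ | u ≤ a ∧ Int.fract (u + s) ≤ b} ∩ Set.Icc 0 1)
          ≤ volume ((Set.Icc 0 c1 ∪ Set.Ioc (1 - s) c2) ∪ {1 - s, 1}) :=
            measure_mono hsub
        _ ≤ volume (Set.Icc 0 c1 ∪ Set.Ioc (1 - s) c2) + volume ({1 - s, 1} : Set ℝ) :=
            measure_union_le _ _
        _ = volume (Set.Icc 0 c1 ∪ Set.Ioc (1 - s) c2) := by
            have hfin : ({1 - s, 1} : Set ℝ).Finite :=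
              (Set.finite_singleton (1:ℝ)).insert (1 - s)
            rw [hfin.measure_zero volume, add_zero]
    · apply measure_mono
      rintro u (⟨hu0, huc⟩ | ⟨hu1, huc⟩)
      · have hub : u ≤ b - s := le_trans huc (min_le_right _ _)
        have hua : u ≤ a := le_trans huc (min_le_left _ _)
        have hus1 : u + s ≤ 1 := by linarith
        refine ⟨⟨hua, ?_⟩, hu0, by linarith⟩
        rcases eq_or_lt_of_le hus1 with h | h
        · rw [h, Int.fract_one]; exact hb0
        · rw [Int.fract_eq_self.mpr ⟨by linarith, h⟩]; linarith
      · have hub : u ≤ b - s + 1 := le_trans huc (min_le_right _ _)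
        have hua : u ≤ a := le_trans huc (min_le_left _ _)
        refine ⟨⟨hua, ?_⟩, by linarith, by linarith⟩
        have hfr : Int.fract (u + s) = Int.fract (u + s - 1) := by
          have h' := Int.fract_add_one (u + s - 1)
          rw [show u + s - 1 + 1 = u + s by ring] at h'
          exact h'
        rcases eq_or_lt_of_le (show u + s - 1 ≤ 1 by linarith) with h | h
        · rw [hfr, h, Int.fract_one]; exact hb0
        · rw [hfr, Int.fract_eq_self.mpr ⟨by linarith, h⟩]; linarith
  rw [key]
  have hdisj : Disjoint (Set.Icc 0 c1) (Set.Ioc (1 - s) c2) := by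
    rw [Set.disjoint_left]
    rintro x ⟨-, hx1⟩ ⟨hx2, -⟩
    have h1 : c1 ≤ 1 - s := le_trans (min_le_right _ _) (by linarith)
    linarith
  rw [measure_union hdisj measurableSet_Ioc, Real.volume_Icc, Real.volume_Ioc]
  have h2 : c2 - (1 - s) = min (a + s - 1) b := by
    rcases le_total a (b - s + 1) with h | h
    · rw [hc2, min_eq_left h, min_eq_left (by linarith)]; ring
    · rw [hc2, min_eq_right h, min_eq_right (by linarith)]; ring
  have hof : ∀ x : ℝ, ENNReal.ofReal (max x 0) = ENNReal.ofReal x := by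
    intro x
    rcases le_total x 0 with h | h
    · rw [max_eq_right h, ENNReal.ofReal_eq_zero.mpr le_rfl,
        ENNReal.ofReal_eq_zero.mpr h]
    · rw [max_eq_left h]
  rw [ENNReal.ofReal_add (le_max_right _ _) (le_max_right _ _), hof, hof,
    sub_zero, h2]
end
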